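/- Let G be a finite graph and 𝒫 any set of profiles of clique separations of G. For every pair P, P' of distinguishable profiles in 𝒫 let A_{P,P'} = {a : a is a clique separation of G that distinguishes P and P' efficiently}. Then the family of these sets A_{P,P'} splinters (in the universe of separations of G). -/

import Mathlib

/-!
For any set of profiles of clique separations of a finite graph `G`, the
family of the sets `A_{P,P'}` of clique separations efficiently
distinguishing a pair of distinguishable profiles splinters in the universe
of separations of `G`.
-/

variable {V : Type*} [Fintype V] [DecidableEq V]

/-- An oriented separation-candidate of a graph on `V`: a pair of vertex sets. -/
abbrev GSep (V : Type*) := Finset V × Finset V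

/-- The involution `(A,B) ↦ (B,A)`. -/
def sepInv (p : GSep V) : GSep V := (p.2, p.1)

/-- The partial order `(A,B) ≤ (C,D)` iff `A ⊆ C` and `B ⊇ D`. -/
def sepLE (p q : GSep V) : Prop := p.1 ⊆ q.1 ∧ q.2 ⊆ p.2

/-- Strict version of `sepLE`. -/
def sepLT (p q : GSep V) : Prop := sepLE p q ∧ p ≠ q

/-- The join `(A,B) ∨ (C,D) = (A ∪ C, B ∩ D)`. -/
def sepJoin (p q : GSep V) : GSep V := (p.1 ∪ q.1, p.2 ∩ q.2)

/-- The meet `(A,B) ∧ (C,D) = (A ∩ C, B ∪ D)`. -/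
def sepMeet (p q : GSep V) : GSep V := (p.1 ∩ q.1, p.2 ∪ q.2)

/-- The order `|(A,B)| = |A ∩ B|`. -/
def sepOrder (p : GSep V) : ℕ := (p.1 ∩ p.2).card

/-- `(A,B)` is a separation of `G`: `A ∪ B = V` and `G` has no edge between
`A \ B` and `B \ A`. -/
def IsSep (G : SimpleGraph V) (p : GSep V) : Prop :=
  p.1 ∪ p.2 = Finset.univ ∧
    ∀ a b : V, G.Adj a b → a ∈ p.1 → a ∉ p.2 → b ∈ p.2 → b ∉ p.1 → False

/-- Two separations are nested if they have `sepLE`-comparable orientations. -/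
def sepNested (p q : GSep V) : Prop :=
  sepLE p q ∨ sepLE p (sepInv q) ∨ sepLE (sepInv p) q ∨ sepLE (sepInv p) (sepInv q)

/-- `c` is a corner separation of `p` and `q`: a join of orientations of `p`
and `q`, or the involution of such a join. -/
def sepIsCorner (c p q : GSep V) : Prop :=
  ∃ p' q', (p' = p ∨ p' = sepInv p) ∧ (q' = q ∨ q' = sepInv q) ∧
    (c = sepJoin p' q' ∨ c = sepInv (sepJoin p' q'))

/-- `(A,B)` is a clique separation of `G`: a separation whose separator
`A ∩ B` induces a complete subgraph. -/
def IsCliqueSep (G : SimpleGraph V) (p : GSep V) : Prop :=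
  IsSep G p ∧ G.IsClique ↑(p.1 ∩ p.2)

/-- A profile of clique separations of `G` of order `k`: a consistent
orientation `P` of the set of clique separations of order `< k` such that for
all `r, s ∈ P` the meet `(sepInv r) ∧ (sepInv s)` is not in `P`. -/
def CliqueProfile (G : SimpleGraph V) (k : ℕ) (P : Set (GSep V)) : Prop :=
  (∀ p ∈ P, IsCliqueSep G p ∧ sepOrder p < k) ∧
  (∀ p : GSep V, IsCliqueSep G p → sepOrder p < k →
    (p ∈ P ∨ sepInv p ∈ P) ∧ (p ∈ P → sepInv p ∈ P → p = sepInv p)) ∧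
  (∀ r ∈ P, ∀ s ∈ P, ¬ sepLT (sepInv r) s) ∧
  (∀ r ∈ P, ∀ s ∈ P, sepMeet (sepInv r) (sepInv s) ∉ P)

/-- The clique separation `p` distinguishes the profiles `P` and `P'`. -/
def cliqueDistinguishes (G : SimpleGraph V) (p : GSep V)
    (P P' : Set (GSep V)) : Prop :=
  IsCliqueSep G p ∧ ((p ∈ P ∧ sepInv p ∈ P') ∨ (sepInv p ∈ P ∧ p ∈ P'))

/-- The clique separation `p` distinguishes `P` and `P'` efficiently: it does
so and has minimum order among all clique separations of `G` distinguishing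
`P` and `P'`. -/
def cliqueEffDist (G : SimpleGraph V) (p : GSep V)
    (P P' : Set (GSep V)) : Prop :=
  cliqueDistinguishes G p P P' ∧
    ∀ q : GSep V, cliqueDistinguishes G q P P' → sepOrder p ≤ sepOrder q

/-- A family `A` of subsets of the universe of separations of `G` splinters
if for all `i`, `j` and every crossing pair `a ∈ A i \ A j`, `b ∈ A j \ A i`,
at least one corner separation of `a` and `b` lies in `A i ∪ A j`. -/
def sepSplinters {I : Type*} (A : I → Set (GSep V)) : Prop :=
  ∀ i j : I, ∀ a ∈ A i, a ∉ A j → ∀ b ∈ A j, b ∉ A i → ¬ sepNested a b →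
    ∃ c, sepIsCorner c a b ∧ c ∈ A i ∪ A j

/-!
Let `a` efficiently distinguish the profiles `P` and `P'` and let `b` be any clique separation.
The separator of `b` is a clique, so it lies on one side of `a`; hence `a` has an orientation
`r = (A, B)` with `C ∩ D ⊆ B` for `b = (C, D)`, and `r ∈ R`, `r* ∈ R'` where `{R, R'} = {P, P'}`.
Both corners `r* ∨ b` and `r* ∨ b*` are then clique separations whose separators lie in `A ∩ B`,
so a corner that distinguishes `R` and `R'` does so efficiently. If neither does, then, as their
inverses lie below `r ∈ R`, consistency puts both inverses into `R` and hence into `R'`; but the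
meet of the two corners is `r* ∈ R'`, which the profile property of `R'` forbids.
-/

section CliqueSeparations

variable {G : SimpleGraph V}

omit [Fintype V] [DecidableEq V] in
@[simp]
lemma sepInv_sepInv (p : GSep V) : sepInv (sepInv p) = p := rfl

omit [Fintype V] in
lemma sepInv_inter (p : GSep V) : (sepInv p).1 ∩ (sepInv p).2 = p.1 ∩ p.2 :=
  Finset.inter_comm _ _

omit [Fintype V] in
lemma sepOrder_sepInv (p : GSep V) : sepOrder (sepInv p) = sepOrder p := by
  rw [sepOrder, sepInv_inter, sepOrder]

lemma IsSep.inv {p : GSep V} (hp : IsSep G p) : IsSep G (sepInv p) :=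
  ⟨by rw [sepInv, Finset.union_comm]; exact hp.1,
    fun x y hxy hx₁ hx₂ hy₁ hy₂ => hp.2 y x hxy.symm hy₁ hy₂ hx₁ hx₂⟩

lemma IsCliqueSep.inv {p : GSep V} (hp : IsCliqueSep G p) : IsCliqueSep G (sepInv p) :=
  ⟨hp.1.inv, by rw [sepInv_inter]; exact hp.2⟩

lemma IsSep.mem_or_mem {p : GSep V} (hp : IsSep G p) (v : V) : v ∈ p.1 ∨ v ∈ p.2 :=
  Finset.mem_union.1 (hp.1 ▸ Finset.mem_univ v)

lemma IsSep.join {p q : GSep V} (hp : IsSep G p) (hq : IsSep G q) :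
    IsSep G (sepJoin p q) := by
  refine ⟨Finset.eq_univ_of_forall fun v => ?_, fun x y hxy hx₁ hx₂ hy₁ hy₂ => ?_⟩
  · simp only [sepJoin, Finset.mem_union, Finset.mem_inter]
    have := hp.mem_or_mem v
    have := hq.mem_or_mem v
    tauto
  · simp only [sepJoin, Finset.mem_union, Finset.mem_inter, not_and, not_or] at hx₁ hx₂ hy₁ hy₂
    by_cases hxp : x ∈ p.2
    · exact hq.2 x y hxy ((hq.mem_or_mem x).resolve_right (hx₂ hxp)) (hx₂ hxp) hy₁.2 hy₂.2
    · exact hp.2 x y hxy ((hp.mem_or_mem x).resolve_right hxp) hxp hy₁.1 hy₂.1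

lemma IsSep.subset_or_subset_of_isClique {p : GSep V} (hp : IsSep G p) {s : Finset V}
    (hs : G.IsClique (s : Set V)) : s ⊆ p.1 ∨ s ⊆ p.2 := by
  by_contra! h
  obtain ⟨⟨u, hus, hu₁⟩, ⟨w, hws, hw₂⟩⟩ := And.imp Finset.not_subset.1 Finset.not_subset.1 h
  have hw₁ := (hp.mem_or_mem w).resolve_right hw₂
  exact hp.2 w u (hs hws hus fun h => hu₁ (h ▸ hw₁)) hw₁ hw₂
    ((hp.mem_or_mem u).resolve_left hu₁) hu₁

omit [Fintype V] in
lemma sepIsCorner_sepInv_left {c p q : GSep V} :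
    sepIsCorner c (sepInv p) q ↔ sepIsCorner c p q := by
  simp only [sepIsCorner, sepInv_sepInv, or_comm]

omit [Fintype V] in
lemma sepLE_sepInv_sepJoin_sepInv (r s : GSep V) : sepLE (sepInv (sepJoin (sepInv r) s)) r :=
  ⟨Finset.inter_subset_left, Finset.subset_union_left⟩

omit [Fintype V] in
lemma sepJoin_sepInv_inter_subset {r s : GSep V} (h : s.1 ∩ s.2 ⊆ r.2) :
    (sepJoin (sepInv r) s).1 ∩ (sepJoin (sepInv r) s).2 ⊆ r.1 ∩ r.2 := by
  intro v hv
  simp only [sepJoin, sepInv, Finset.mem_inter, Finset.mem_union] at hv ⊢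
  have := @h v
  simp only [Finset.mem_inter] at this
  tauto

omit [Fintype V] in
lemma sepOrder_sepJoin_sepInv_le {r s : GSep V} (h : s.1 ∩ s.2 ⊆ r.2) :
    sepOrder (sepJoin (sepInv r) s) ≤ sepOrder r :=
  Finset.card_le_card (sepJoin_sepInv_inter_subset h)

lemma IsCliqueSep.join_inv {r s : GSep V} (hr : IsCliqueSep G r) (hs : IsSep G s)
    (h : s.1 ∩ s.2 ⊆ r.2) : IsCliqueSep G (sepJoin (sepInv r) s) :=
  ⟨hr.1.inv.join hs, hr.2.subset (Finset.coe_subset.2 (sepJoin_sepInv_inter_subset h))⟩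

lemma sepMeet_sepJoin_sepInv {r s : GSep V} (hs : IsSep G s) (h : s.1 ∩ s.2 ⊆ r.2) :
    sepMeet (sepJoin (sepInv r) s) (sepJoin (sepInv r) (sepInv s)) = sepInv r := by
  ext v
  · have := @h v
    simp only [sepMeet, sepJoin, sepInv, Finset.mem_inter, Finset.mem_union] at this ⊢
    tauto
  · have := hs.mem_or_mem v
    simp only [sepMeet, sepJoin, sepInv, Finset.mem_inter, Finset.mem_union]
    tauto

lemma cliqueDistinguishes_comm {p : GSep V} {P P' : Set (GSep V)} :
    cliqueDistinguishes G p P P' ↔ cliqueDistinguishes G p P' P := by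
  unfold cliqueDistinguishes
  tauto

lemma cliqueEffDist_comm {p : GSep V} {P P' : Set (GSep V)} :
    cliqueEffDist G p P P' ↔ cliqueEffDist G p P' P := by
  simp only [cliqueEffDist, cliqueDistinguishes_comm]

lemma cliqueDistinguishes_sepInv {p : GSep V} {P P' : Set (GSep V)} :
    cliqueDistinguishes G (sepInv p) P P' ↔ cliqueDistinguishes G p P P' :=
  ⟨fun h => ⟨sepInv_sepInv p ▸ h.1.inv, h.2.symm⟩, fun h => ⟨h.1.inv, h.2.symm⟩⟩

lemma cliqueEffDist_sepInv {p : GSep V} {P P' : Set (GSep V)} :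
    cliqueEffDist G (sepInv p) P P' ↔ cliqueEffDist G p P P' := by
  simp only [cliqueEffDist, cliqueDistinguishes_sepInv, sepOrder_sepInv]

lemma CliqueProfile.mem_of_sepLE {k : ℕ} {P : Set (GSep V)} (hP : CliqueProfile G k P)
    {c r : GSep V} (hr : r ∈ P) (hc : IsCliqueSep G c) (hck : sepOrder c < k)
    (hcr : sepLE c r) : c ∈ P := by
  rcases (hP.2.1 c hc hck).1 with hcP | hc'
  · exact hcP
  by_contra hcP
  exact hP.2.2.1 _ hc' r hr ⟨hcr, by rintro rfl; exact hcP hr⟩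

end CliqueSeparations

section EfficientDistinguishers

variable {G : SimpleGraph V} {k k' : ℕ} {R R' : Set (GSep V)}

lemma sepInv_sepJoin_sepInv_mem_of_not_cliqueEffDist (hR : CliqueProfile G k R)
    (hR' : CliqueProfile G k' R') {r s : GSep V} (hr : cliqueEffDist G r R R') (hrR : r ∈ R)
    (hrR' : sepInv r ∈ R') (hs : IsSep G s) (hsr : s.1 ∩ s.2 ⊆ r.2)
    (hne : ¬ cliqueEffDist G (sepJoin (sepInv r) s) R R') :
    sepInv (sepJoin (sepInv r) s) ∈ R' := by
  set c := sepJoin (sepInv r) s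
  have hc : IsCliqueSep G c := hr.1.1.join_inv hs hsr
  have hcr : sepOrder c ≤ sepOrder r := sepOrder_sepJoin_sepInv_le hsr
  have hcR : sepInv c ∈ R :=
    hR.mem_of_sepLE hrR hc.inv (sepOrder_sepInv c ▸ hcr.trans_lt (hR.1 r hrR).2)
      (sepLE_sepInv_sepJoin_sepInv r s)
  have hck' : sepOrder c < k' := hcr.trans_lt (sepOrder_sepInv r ▸ (hR'.1 _ hrR').2)
  refine (hR'.2.1 c hc hck').1.resolve_left fun hcR' => hne ?_
  exact ⟨⟨hc, Or.inr ⟨hcR, hcR'⟩⟩, fun q hq => hcr.trans (hr.2 q hq)⟩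

lemma exists_sepIsCorner_cliqueEffDist_of_subset (hR : CliqueProfile G k R)
    (hR' : CliqueProfile G k' R') {r s : GSep V} (hr : cliqueEffDist G r R R') (hrR : r ∈ R)
    (hrR' : sepInv r ∈ R') (hs : IsSep G s) (hsr : s.1 ∩ s.2 ⊆ r.2) :
    ∃ c, sepIsCorner c r s ∧ cliqueEffDist G c R R' := by
  by_contra! hne
  have h₁ := sepInv_sepJoin_sepInv_mem_of_not_cliqueEffDist hR hR' hr hrR hrR' hs hsr
    (hne _ ⟨sepInv r, s, Or.inr rfl, Or.inl rfl, Or.inl rfl⟩)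
  have h₂ := sepInv_sepJoin_sepInv_mem_of_not_cliqueEffDist hR hR' hr hrR hrR' hs.inv
    (by rwa [sepInv_inter]) (hne _ ⟨sepInv r, sepInv s, Or.inr rfl, Or.inr rfl, Or.inl rfl⟩)
  refine hR'.2.2.2 _ h₁ _ h₂ ?_
  rwa [sepInv_sepInv, sepInv_sepInv, sepMeet_sepJoin_sepInv hs hsr]

lemma exists_sepIsCorner_cliqueEffDist_of_mem (hR : CliqueProfile G k R)
    (hR' : CliqueProfile G k' R') {r s : GSep V} (hr : cliqueEffDist G r R R') (hrR : r ∈ R)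
    (hrR' : sepInv r ∈ R') (hs : IsCliqueSep G s) :
    ∃ c, sepIsCorner c r s ∧ cliqueEffDist G c R R' := by
  rcases hr.1.1.1.subset_or_subset_of_isClique hs.2 with hsr | hsr
  · obtain ⟨c, hc, hcR⟩ := exists_sepIsCorner_cliqueEffDist_of_subset hR' hR
      (cliqueEffDist_sepInv.2 (cliqueEffDist_comm.1 hr)) hrR' hrR hs.1 hsr
    exact ⟨c, sepIsCorner_sepInv_left.1 hc, cliqueEffDist_comm.1 hcR⟩
  · exact exists_sepIsCorner_cliqueEffDist_of_subset hR hR' hr hrR hrR' hs.1 hsr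

lemma exists_sepIsCorner_cliqueEffDist (hR : CliqueProfile G k R)
    (hR' : CliqueProfile G k' R') {a b : GSep V} (ha : cliqueEffDist G a R R')
    (hb : IsCliqueSep G b) : ∃ c, sepIsCorner c a b ∧ cliqueEffDist G c R R' := by
  rcases ha.1.2 with ⟨haR, haR'⟩ | ⟨haR, haR'⟩
  · exact exists_sepIsCorner_cliqueEffDist_of_mem hR hR' ha haR haR' hb
  · obtain ⟨c, hc, hcR⟩ := exists_sepIsCorner_cliqueEffDist_of_mem hR' hR
      (cliqueEffDist_comm.1 ha) haR' haR hb
    exact ⟨c, hc, cliqueEffDist_comm.1 hcR⟩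

end EfficientDistinguishers

/-- **The family of the sets of efficient distinguishers of distinguishable
profiles of clique separations splinters.** -/
theorem clique_efficient_distinguishers_splinter (G : SimpleGraph V)
    (Ps : Set (Set (GSep V))) (hPs : ∀ P ∈ Ps, ∃ k, CliqueProfile G k P) :
    sepSplinters
      (fun pp : {pp : Set (GSep V) × Set (GSep V) // pp.1 ∈ Ps ∧ pp.2 ∈ Ps ∧
          ∃ c, cliqueDistinguishes G c pp.1 pp.2} =>
        {p | cliqueEffDist G p pp.1.1 pp.1.2}) := by
  intro i j a ha _ b hb _ _
  obtain ⟨k, hP⟩ := hPs i.1.1 i.2.1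
  obtain ⟨k', hP'⟩ := hPs i.1.2 i.2.2.1
  obtain ⟨c, hc, hcP⟩ := exists_sepIsCorner_cliqueEffDist hP hP' ha hb.1.1
  exact ⟨c, hc, Or.inl hcP⟩
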